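/- There exists a perfect coloring of H with parameter matrix [[0,3,0],[1,0,2],[0,3,0]] (the array [03-102-30]), and any two perfect colorings of H with this parameter matrix are equivalent. -/

import Mathlib

/-!
The grid is bipartite, and in a perfect coloring with matrix `[03-102-30]` the color-1 vertices
form exactly one of the two classes. The translations `a = y x` and `b = z x` commute and identify
the other class with `ℤ²`. Each color-1 vertex is adjacent to a triangle `(m, n), (m + 1, n),
(m, n + 1)` of that class, exactly one of whose corners has color 0, and this rule forces color 0
to be a stripe `m - n ≡ c (mod 3)`. So every perfect coloring is a left translate of the coloring
pulled back along `G → D₃` (sending `x, y, z` to the three reflections), and left translations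
are automorphisms of `H`.
-/


namespace HexGrid

/-- Relations of the hexagonal grid group: x² = y² = z² = (x·y·z)² = 1. -/
def hexRels : Set (FreeGroup (Fin 3)) :=
  {FreeGroup.of 0 * FreeGroup.of 0,
   FreeGroup.of 1 * FreeGroup.of 1,
   FreeGroup.of 2 * FreeGroup.of 2,
   FreeGroup.of 0 * FreeGroup.of 1 * FreeGroup.of 2 *
     (FreeGroup.of 0 * FreeGroup.of 1 * FreeGroup.of 2)}

/-- The group `G = ⟨x, y, z ∣ x² = y² = z² = (x·y·z)² = 1⟩`. -/
abbrev G := PresentedGroup hexRels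

/-- The generators of `G`. -/
def gen (i : Fin 3) : G := PresentedGroup.of i

def x : G := gen 0
def y : G := gen 1
def z : G := gen 2

lemma gen_mul_self (i : Fin 3) : gen i * gen i = 1 := by
  have h : FreeGroup.of i * FreeGroup.of i ∈ Subgroup.normalClosure hexRels :=
    Subgroup.subset_normalClosure (by fin_cases i <;> simp [hexRels])
  exact (QuotientGroup.eq_one_iff _).mpr h

/-- The infinite hexagonal grid `H`: the Cayley graph of `G` with respect to `{x, y, z}`;
`u` and `v` are adjacent iff `v ∈ {u·x, u·y, u·z}`. -/
def H : SimpleGraph G where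
  Adj u v := u ≠ v ∧ ∃ i : Fin 3, v = u * gen i
  symm := by
    constructor
    rintro u v ⟨hne, i, rfl⟩
    exact ⟨hne.symm, i, by rw [mul_assoc, gen_mul_self, mul_one]⟩
  loopless := by constructor; rintro u ⟨hne, -⟩; exact hne rfl

/-- `φ` is a perfect coloring of `H` with parameter matrix `A`: for every vertex `u` and
every color `j`, the number of neighbors of `u` in `H` colored `j` equals `A (φ u) j`. -/
def IsPerfectColoring {k : ℕ} (φ : G → Fin k) (A : Matrix (Fin k) (Fin k) ℕ) : Prop :=
  ∀ u : G, ∀ j : Fin k, Set.ncard {v : G | H.Adj u v ∧ φ v = j} = A (φ u) j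

/-- A matrix is tridiagonal if its entries vanish whenever the indices differ by more
than one. -/
def IsTridiagonal {k : ℕ} (A : Matrix (Fin k) (Fin k) ℕ) : Prop :=
  ∀ i j : Fin k, ((i : ℕ) + 1 < (j : ℕ) ∨ (j : ℕ) + 1 < (i : ℕ)) → A i j = 0

/-- Two colorings are equivalent if one is obtained from the other by composing with a
graph automorphism of `H`. -/
def EquivColoring {k : ℕ} (φ ψ : G → Fin k) : Prop :=
  ∃ g : H ≃g H, ψ = fun v => φ (g v)

open Finset

theorem commute_mul_of_involutions {Γ : Type*} [Group Γ] {X Y Z : Γ} (hx : X * X = 1)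
    (hy : Y * Y = 1) (hz : Z * Z = 1) (hxyz : X * Y * Z * (X * Y * Z) = 1) :
    Commute (Y * X) (Z * X) := by
  have hzxy : Z * X * Y * (Z * X * Y) = 1 := by
    have : Z * X * Y * (Z * X * Y) = (X * Y)⁻¹ * (X * Y * Z * (X * Y * Z)) * (X * Y) := by
      rw [← inv_eq_of_mul_eq_one_right hx, ← inv_eq_of_mul_eq_one_right hy]; group
    rw [this, hxyz, mul_one, inv_mul_cancel]
  have : Z * X * Y = Y * X * Z := by
    rw [← inv_eq_of_mul_eq_one_right hzxy, mul_inv_rev, mul_inv_rev,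
      inv_eq_of_mul_eq_one_right hx, inv_eq_of_mul_eq_one_right hy,
      inv_eq_of_mul_eq_one_right hz, mul_assoc]
  calc Y * X * (Z * X) = Y * X * Z * X := by group
    _ = Z * X * (Y * X) := by rw [← this]; group

def ExactlyOne (p q r : Prop) : Prop := (p ∧ ¬q ∧ ¬r) ∨ (¬p ∧ q ∧ ¬r) ∨ (¬p ∧ ¬q ∧ r)

lemma iff_zero_of_forall_iff_add_one {p : ℤ → Prop} (h : ∀ k, p k ↔ p (k + 1)) (m : ℤ) :
    p m ↔ p 0 := by
  induction m using Int.induction_on with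
  | zero => rfl
  | succ k ih => exact (h k).symm.trans ih
  | pred k ih => exact (h _).trans (by rwa [sub_add_cancel])

theorem exists_modEq_of_exactlyOne_consecutive {g : ℤ → Prop}
    (hg : ∀ k, ExactlyOne (g k) (g (k + 1)) (g (k + 2))) : ∃ c, ∀ k, g k ↔ k ≡ c [ZMOD 3] := by
  have hper (k : ℤ) : g (k + 3) ↔ g k := by
    have h₁ := hg k
    have h₂ := hg (k + 1)
    rw [add_assoc, add_assoc, one_add_one_eq_two, show (1 : ℤ) + 2 = 3 by norm_num] at h₂
    unfold ExactlyOne at h₁ h₂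
    tauto
  have hmod (k : ℤ) : g k ↔ g (k % 3) := by
    have := iff_zero_of_forall_iff_add_one (p := fun t => g (k % 3 + 3 * t))
      (fun t => by rw [mul_add, mul_one, ← add_assoc, hper]) (k / 3)
    rwa [Int.emod_add_mul_ediv, mul_zero, add_zero] at this
  have h₀ := hg 0
  rw [zero_add, zero_add] at h₀
  unfold ExactlyOne at h₀
  have huniq (r s : ℤ) (hr : 0 ≤ r ∧ r < 3) (hs : 0 ≤ s ∧ s < 3) (hgr : g r) (hgs : g s) :
      r = s := by
    obtain ⟨hr₀, hr₃⟩ := hr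
    obtain ⟨hs₀, hs₃⟩ := hs
    interval_cases r <;> interval_cases s <;> tauto
  obtain ⟨c, hc⟩ : ∃ c, g c := by
    rcases h₀ with h | h | h
    exacts [⟨0, h.1⟩, ⟨1, h.2.1⟩, ⟨2, h.2.2⟩]
  refine ⟨c, fun k => ⟨fun hk => ?_, fun hkc => ?_⟩⟩
  · exact huniq _ _ ⟨by omega, by omega⟩ ⟨by omega, by omega⟩ ((hmod k).mp hk) ((hmod c).mp hc)
  · rw [hmod, hkc.eq, ← hmod]
    exact hc

section Triangles

variable {f : ℤ → ℤ → Prop} (hf : ∀ m n, ExactlyOne (f m n) (f (m + 1) n) (f m (n + 1)))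
include hf

lemma diag_iff_of_exactlyOne (m n : ℤ) : f m n ↔ f (m + 1) (n + 1) := by
  have h₁ := hf m n
  have h₂ := hf (m + 1) n
  have h₃ := hf m (n + 1)
  have h₄ := hf (m + 1) (n + 1)
  have h₅ := hf (m + 1 + 1) n
  have h₆ := hf m (n + 1 + 1)
  unfold ExactlyOne at *
  grind

lemma iff_sub_of_exactlyOne (m n : ℤ) : f m n ↔ f (m - n) 0 := by
  simpa using iff_zero_of_forall_iff_add_one (p := fun t => f (m - n + t) t)
    (fun t => by rw [← add_assoc, ← diag_iff_of_exactlyOne hf]) n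

theorem exists_modEq_of_exactlyOne : ∃ c, ∀ m n, f m n ↔ m - n ≡ c [ZMOD 3] := by
  obtain ⟨c, hc⟩ := exists_modEq_of_exactlyOne_consecutive (g := (f · 0)) fun k => by
    have h := hf (k + 1) 0
    rw [zero_add, iff_sub_of_exactlyOne hf (k + 1) 1, add_sub_cancel_right, add_assoc,
      one_add_one_eq_two] at h
    unfold ExactlyOne at h ⊢
    tauto
  exact ⟨c, fun m n => (iff_sub_of_exactlyOne hf m n).trans (hc _)⟩

end Triangles

lemma x_mul_y_mul_z_sq : x * y * z * (x * y * z) = 1 :=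
  (QuotientGroup.eq_one_iff _).mpr (Subgroup.subset_normalClosure (by simp [hexRels]))

def a : G := y * x
def b : G := z * x

lemma commute_a_b : Commute a b :=
  commute_mul_of_involutions (gen_mul_self 0) (gen_mul_self 1) (gen_mul_self 2) x_mul_y_mul_z_sq

lemma mul_gen_mul_gen_self (u : G) (i : Fin 3) : u * gen i * gen i = u := by
  rw [mul_assoc, gen_mul_self, mul_one]

def translation (m n : ℤ) : G := a ^ m * b ^ n

lemma translation_zero_zero : translation 0 0 = 1 := by
  rw [translation, zpow_zero, zpow_zero, mul_one]

lemma translation_mul_translation (m n m' n' : ℤ) :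
    translation m n * translation m' n' = translation (m + m') (n + n') := by
  simp only [translation, zpow_add, mul_assoc]
  rw [← mul_assoc (b ^ n), ← (commute_a_b.zpow_zpow m' n).eq, mul_assoc]

lemma translation_mul_gen_one (m n : ℤ) :
    translation m n * gen 1 = translation (m + 1) n * gen 0 := by
  have : gen 1 = translation 1 0 * gen 0 := by
    rw [translation, zpow_one, zpow_zero, mul_one, a, y, x, mul_assoc, gen_mul_self, mul_one]
  rw [this, ← mul_assoc, translation_mul_translation, add_zero]

lemma translation_mul_gen_two (m n : ℤ) :
    translation m n * gen 2 = translation m (n + 1) * gen 0 := by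
  have : gen 2 = translation 0 1 * gen 0 := by
    rw [translation, zpow_one, zpow_zero, one_mul, b, z, x, mul_assoc, gen_mul_self, mul_one]
  rw [this, ← mul_assoc, translation_mul_translation, add_zero]

lemma exists_translation_eq (u : G) :
    ∃ m n, u = translation m n ∨ u = translation m n * gen 0 := by
  have step (v : G) (i : Fin 3)
      (hv : ∃ m n, v = translation m n ∨ v = translation m n * gen 0) :
      ∃ m n, v * gen i = translation m n ∨ v * gen i = translation m n * gen 0 := by
    obtain ⟨m, n, rfl | rfl⟩ := hv
    · fin_cases i
      exacts [⟨m, n, .inr rfl⟩, ⟨m + 1, n, .inr (translation_mul_gen_one m n)⟩,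
        ⟨m, n + 1, .inr (translation_mul_gen_two m n)⟩]
    · have e₁ := translation_mul_gen_one (m - 1) n
      have e₂ := translation_mul_gen_two m (n - 1)
      rw [sub_add_cancel] at e₁ e₂
      fin_cases i
      exacts [⟨m, n, .inl (mul_gen_mul_gen_self _ 0)⟩,
        ⟨m - 1, n, .inl (e₁ ▸ mul_gen_mul_gen_self _ 1)⟩,
        ⟨m, n - 1, .inl (e₂ ▸ mul_gen_mul_gen_self _ 2)⟩]
  have hu : u ∈ Subgroup.closure (Set.range gen) := by
    rw [show Set.range gen = Set.range PresentedGroup.of from rfl,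
      PresentedGroup.closure_range_of]
    trivial
  induction hu using Subgroup.closure_induction_right with
  | one => exact ⟨0, 0, .inl translation_zero_zero.symm⟩
  | mul_right v _ _ hi ih =>
    obtain ⟨i, rfl⟩ := hi
    exact step v i ih
  | mul_inv_cancel v _ _ hi ih =>
    obtain ⟨i, rfl⟩ := hi
    rw [inv_eq_of_mul_eq_one_right (gen_mul_self i)]
    exact step v i ih

-- `ZMod 3` is by definition `Fin 3`, so a generator index is directly a reflection index.
def toDihedral : G →* DihedralGroup 3 :=
  PresentedGroup.toGroup (f := fun i => .sr i) (by
    rintro r (rfl | rfl | rfl | rfl) <;> decide)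

lemma toDihedral_gen (i : Fin 3) : toDihedral (gen i) = .sr i :=
  PresentedGroup.toGroup.of _

lemma gen_injective : Function.Injective gen := fun i j h =>
  DihedralGroup.sr.inj <|
    (toDihedral_gen i).symm.trans <| (congrArg _ h).trans (toDihedral_gen j)

lemma mul_gen_ne_self (u : G) (i : Fin 3) : u * gen i ≠ u := fun h => by
  have := congrArg toDihedral (mul_eq_left.mp h)
  rw [toDihedral_gen, map_one, DihedralGroup.one_def] at this
  cases this

lemma adj_iff {u v : G} : H.Adj u v ↔ ∃ i, v = u * gen i :=
  ⟨And.right, fun ⟨i, hv⟩ => ⟨hv ▸ (mul_gen_ne_self u i).symm, i, hv⟩⟩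

lemma ncard_adj_and (u : G) (p : G → Prop) [DecidablePred p] :
    {v | H.Adj u v ∧ p v}.ncard = #{i | p (u * gen i)} := by
  have : {v | H.Adj u v ∧ p v} = (u * gen ·) '' {i | p (u * gen i)} := by
    ext v
    simp only [adj_iff, Set.mem_ofPred_eq, Set.mem_image]
    constructor
    · rintro ⟨⟨i, rfl⟩, hp⟩
      exact ⟨i, hp, rfl⟩
    · rintro ⟨i, hp, rfl⟩
      exact ⟨⟨i, rfl⟩, hp⟩
  rw [this, Set.ncard_image_of_injective _ fun i j h => gen_injective (mul_left_cancel h),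
    ← Set.ncard_coe_finset, Finset.coe_filter]
  simp

lemma isPerfectColoring_iff {k : ℕ} {φ : G → Fin k} {A : Matrix (Fin k) (Fin k) ℕ} :
    IsPerfectColoring φ A ↔ ∀ u j, #{i | φ (u * gen i) = j} = A (φ u) j := by
  simp only [IsPerfectColoring, ncard_adj_and]

lemma IsPerfectColoring.comp_mul_left {k : ℕ} {φ : G → Fin k} {A : Matrix (Fin k) (Fin k) ℕ}
    (hφ : IsPerfectColoring φ A) (g : G) : IsPerfectColoring (fun u => φ (g * u)) A := by
  rw [isPerfectColoring_iff] at hφ ⊢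
  intro u j
  simpa only [mul_assoc] using hφ (g * u) j

def mulLeftIso (g : G) : H ≃g H where
  toEquiv := Equiv.mulLeft g
  map_rel_iff' {u v} := by
    simp only [Equiv.coe_mulLeft, adj_iff, mul_assoc, mul_right_inj]

abbrev paramMatrix : Matrix (Fin 3) (Fin 3) ℕ := !![0,3,0;1,0,2;0,3,0]

def dihedralColor : DihedralGroup 3 → Fin 3
  | .r _ => 1
  | .sr k => if k = 0 then 0 else 2

def canonicalColoring (u : G) : Fin 3 := dihedralColor (toDihedral u)

lemma isPerfectColoring_canonicalColoring :
    IsPerfectColoring canonicalColoring paramMatrix := by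
  rw [isPerfectColoring_iff]
  intro u j
  simp only [canonicalColoring, map_mul, toDihedral_gen]
  generalize toDihedral u = d
  revert d j
  decide

lemma toDihedral_translation (m n : ℤ) : toDihedral (translation m n) = .r (n - m) := by
  have ha : toDihedral a = .r (-1) := by
    rw [a, map_mul, y, x, toDihedral_gen, toDihedral_gen]; decide
  have hb : toDihedral b = .r 1 := by
    rw [b, map_mul, z, x, toDihedral_gen, toDihedral_gen]; decide
  rw [translation, map_mul, map_zpow, map_zpow, ha, hb, DihedralGroup.r_zpow,
    DihedralGroup.r_zpow, DihedralGroup.r_mul_r]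
  ring_nf

lemma canonicalColoring_translation (m n : ℤ) : canonicalColoring (translation m n) = 1 := by
  rw [canonicalColoring, toDihedral_translation, dihedralColor]

lemma canonicalColoring_translation_mul_gen_zero (m n : ℤ) :
    canonicalColoring (translation m n * gen 0) = if m ≡ n [ZMOD 3] then 0 else 2 := by
  -- restated with `0 : ZMod 3` rather than `0 : Fin 3`, so that `r_mul_sr` applies
  have hx : toDihedral (gen 0) = .sr (0 : ZMod 3) := toDihedral_gen 0
  simp only [canonicalColoring, map_mul, toDihedral_translation, hx, DihedralGroup.r_mul_sr,
    dihedralColor, zero_sub, neg_sub, sub_eq_zero, ZMod.intCast_eq_intCast_iff, Nat.cast_ofNat]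

namespace IsPerfectColoring

variable {φ : G → Fin 3} (hφ : IsPerfectColoring φ paramMatrix)
include hφ

lemma eq_one_iff_mul_gen_ne_one (u : G) (i : Fin 3) : φ u = 1 ↔ φ (u * gen i) ≠ 1 := by
  have key : ∀ (k : Fin 3) (c : Fin 3 → Fin 3), (∀ j, #{i | c i = j} = paramMatrix k j) →
      ∀ i, (k = 1 ↔ c i ≠ 1) := by
    decide
  exact key _ _ (isPerfectColoring_iff.mp hφ u) i

lemma exactlyOne_mul_gen_eq_zero {u : G} (hu : φ u = 1) :
    ExactlyOne (φ (u * gen 0) = 0) (φ (u * gen 1) = 0) (φ (u * gen 2) = 0) := by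
  have key : ∀ (c : Fin 3 → Fin 3), (∀ j, #{i | c i = j} = paramMatrix 1 j) →
      ExactlyOne (c 0 = 0) (c 1 = 0) (c 2 = 0) := by
    unfold ExactlyOne
    decide
  exact key _ (hu ▸ isPerfectColoring_iff.mp hφ u)

lemma map_translation_of_map_one (h₁ : φ 1 = 1) (m n : ℤ) : φ (translation m n) = 1 := by
  have hm (j k : ℤ) : φ (translation k j) = 1 ↔ φ (translation (k + 1) j) = 1 := by
    rw [hφ.eq_one_iff_mul_gen_ne_one _ 1, hφ.eq_one_iff_mul_gen_ne_one _ 0,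
      translation_mul_gen_one]
  have hn (k : ℤ) : φ (translation 0 k) = 1 ↔ φ (translation 0 (k + 1)) = 1 := by
    rw [hφ.eq_one_iff_mul_gen_ne_one _ 2, hφ.eq_one_iff_mul_gen_ne_one _ 0,
      translation_mul_gen_two]
  rw [iff_zero_of_forall_iff_add_one (hm n), iff_zero_of_forall_iff_add_one hn,
    translation_zero_zero, h₁]

lemma exists_eq_canonicalColoring_mul_of_map_one (h₁ : φ 1 = 1) :
    ∃ g, ∀ u, φ u = canonicalColoring (g * u) := by
  have heven := hφ.map_translation_of_map_one h₁
  obtain ⟨c, hc⟩ := exists_modEq_of_exactlyOne (f := fun m n => φ (translation m n * gen 0) = 0)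
    fun m n => by
      simpa only [translation_mul_gen_one, translation_mul_gen_two]
        using hφ.exactlyOne_mul_gen_eq_zero (heven m n)
  refine ⟨translation 0 c, fun u => ?_⟩
  obtain ⟨m, n, rfl | rfl⟩ := exists_translation_eq u
  · rw [heven, translation_mul_translation, canonicalColoring_translation]
  · have hodd : φ (translation m n * gen 0) ≠ 1 :=
      (hφ.eq_one_iff_mul_gen_ne_one _ 0).mp (heven m n)
    rw [← mul_assoc, translation_mul_translation, canonicalColoring_translation_mul_gen_zero]
    split_ifs with h
    · exact (hc m n).mpr (by simp only [Int.ModEq] at h ⊢; omega)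
    · have h₀ : φ (translation m n * gen 0) ≠ 0 := fun h₀ =>
        h (by have := (hc m n).mp h₀; simp only [Int.ModEq] at this ⊢; omega)
      revert h₀ hodd
      generalize φ (translation m n * gen 0) = k
      revert k
      decide

theorem exists_eq_canonicalColoring_mul : ∃ g, ∀ u, φ u = canonicalColoring (g * u) := by
  obtain ⟨g, hg⟩ : ∃ g, φ g = 1 := by
    by_cases h₁ : φ 1 = 1
    · exact ⟨1, h₁⟩
    · exact ⟨1 * gen 0, not_not.mp ((hφ.eq_one_iff_mul_gen_ne_one 1 0).not.mp h₁)⟩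
  obtain ⟨h, hh⟩ := (hφ.comp_mul_left g).exists_eq_canonicalColoring_mul_of_map_one
    (by rwa [mul_one])
  exact ⟨h * g⁻¹, fun u => by rw [mul_assoc, ← hh, mul_inv_cancel_left]⟩

end IsPerfectColoring

/-- There is a perfect coloring of `H` with parameter matrix `[03-102-30]`, and it is
unique up to equivalence. -/
theorem coloring_03_102_30 :
    (∃ φ : G → Fin 3, IsPerfectColoring φ !![0,3,0;1,0,2;0,3,0]) ∧
    ∀ φ ψ : G → Fin 3, IsPerfectColoring φ !![0,3,0;1,0,2;0,3,0] →
      IsPerfectColoring ψ !![0,3,0;1,0,2;0,3,0] → EquivColoring φ ψ := by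
  refine ⟨⟨canonicalColoring, isPerfectColoring_canonicalColoring⟩, fun φ ψ hφ hψ => ?_⟩
  obtain ⟨g, hg⟩ := hφ.exists_eq_canonicalColoring_mul
  obtain ⟨h, hh⟩ := hψ.exists_eq_canonicalColoring_mul
  refine ⟨mulLeftIso (g⁻¹ * h), funext fun v => ?_⟩
  simp only [mulLeftIso, RelIso.coe_fn_mk, Equiv.coe_mulLeft, hg, hh, mul_assoc,
    mul_inv_cancel_left]

end HexGrid
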